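/- arXiv:1407.1909 — 3 statements merged into one kernel-verified Lean document; each statement's English description precedes it below -/
import Mathlib

section
/- Let n ≥ 3 and let x_1, …, x_n ∈ ℝ² be the vertices of a polygon with indices modulo n, edge vectors e_J = x_{J+1} − x_J, rot(a,b) = (b,−a), signed area |E| = (1/2)∑_{J=1}^n (x_{J,1} x_{J+1,2} − x_{J+1,1} x_{J,2}) assumed nonzero, and R_I = (1/2)(rot(e_{I−1}) + rot(e_I)). For each I let φ_I : ℝ² → ℝ be a boundary hat function (φ_I(x_J) = δ_{IJ}, and φ_I agrees with some affine map on each edge segment), and define the one-subcell smoothed gradient B̃_I := (1/|E|) ∑_{J=1}^n (∫₀¹ φ_I((1−t)x_J + t x_{J+1}) dt) · rot(e_J). Then for all I, J ∈ {1,…,n}: |E| · (B̃_I · B̃_J) = (1/|E|) (R_I · R_J); that is, the stiffness matrix of the cell-based smoothed finite element method with a single smoothing subcell (for the Laplace bilinear form) coincides exactly with the consistency term R Rᵀ/|E| of the virtual element method. -/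
open scoped BigOperators

/-- Rotation by −90°: `rot (a, b) = (b, −a)`. -/
def rot (p : ℝ × ℝ) : ℝ × ℝ := (p.2, -p.1)

/-- Edge vector `e_J = x_{J+1} − x_J` of a polygon with vertices indexed mod `n`. -/
def edge (n : ℕ) (x : ZMod n → ℝ × ℝ) (J : ZMod n) : ℝ × ℝ := x (J + 1) - x J

/-- VEM consistency vector `R_I = (1/2)(rot(e_{I−1}) + rot(e_I))`. -/
noncomputable def Rvec (n : ℕ) (x : ZMod n → ℝ × ℝ) (I : ZMod n) : ℝ × ℝ :=
  (1 / 2 : ℝ) • (rot (edge n x (I - 1)) + rot (edge n x I))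

/-- Signed area `|E| = (1/2) ∑_J (x_{J,1} x_{J+1,2} − x_{J+1,1} x_{J,2})`. -/
noncomputable def signedArea (n : ℕ) [NeZero n] (x : ZMod n → ℝ × ℝ) : ℝ :=
  (1 / 2 : ℝ) * ∑ J : ZMod n, ((x J).1 * (x (J + 1)).2 - (x (J + 1)).1 * (x J).2)

/-- Euclidean dot product on `ℝ²`. -/
def dot2 (u w : ℝ × ℝ) : ℝ := u.1 * w.1 + u.2 * w.2

lemma affine_seg_integral (A : (ℝ × ℝ) →ᵃ[ℝ] ℝ) (p q : ℝ × ℝ) :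
    ∫ t in (0:ℝ)..1, A ((1 - t) • p + t • q) = (A p + A q) / 2 := by
  have h : ∀ t : ℝ, A ((1 - t) • p + t • q) = A p + t * (A q - A p) := by
    intro t
    have hpt : (1 - t) • p + t • q = AffineMap.lineMap p q t := by
      simp [AffineMap.lineMap_apply]; module
    rw [hpt, AffineMap.apply_lineMap, AffineMap.lineMap_apply]
    simp [smul_eq_mul]; ring
  simp only [h]
  rw [intervalIntegral.integral_add intervalIntegrable_const
    ((intervalIntegral.intervalIntegrable_id).mul_const _)]
  simp [intervalIntegral.integral_mul_const, integral_id]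
  ring

/-- **Equivalence of the one-subcell SFEM stiffness matrix and the VEM
consistency term.** With boundary hat functions `φ_I` and one-subcell smoothed
gradients `B̃_I = (1/|E|) ∑_J (∫₀¹ φ_I((1−t)x_J + t x_{J+1}) dt) rot(e_J)`,
one has `|E| (B̃_I · B̃_J) = (1/|E|) (R_I · R_J)` for all `I, J`. -/
theorem sfem_one_subcell_eq_vem_consistency
    (n : ℕ) [NeZero n] (hn : 3 ≤ n)
    (x : ZMod n → ℝ × ℝ)
    (hA : signedArea n x ≠ 0)
    (φ : ZMod n → ℝ × ℝ → ℝ)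
    (hval : ∀ I J : ZMod n, φ I (x J) = if J = I then 1 else 0)
    (haff : ∀ I J : ZMod n, ∃ A : (ℝ × ℝ) →ᵃ[ℝ] ℝ,
      ∀ t ∈ Set.Icc (0 : ℝ) 1,
        φ I ((1 - t) • x J + t • x (J + 1)) = A ((1 - t) • x J + t • x (J + 1)))
    (B : ZMod n → ℝ × ℝ)
    (hB : ∀ I : ZMod n, B I = (signedArea n x)⁻¹ •
      ∑ J : ZMod n,
        (∫ t in (0:ℝ)..1, φ I ((1 - t) • x J + t • x (J + 1))) • rot (edge n x J)) :
    ∀ I J : ZMod n,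
      signedArea n x * dot2 (B I) (B J)
        = (signedArea n x)⁻¹ * dot2 (Rvec n x I) (Rvec n x J) := by
  have key : ∀ I : ZMod n, B I = (signedArea n x)⁻¹ • Rvec n x I := by
    intro I
    rw [hB]
    congr 1
    have hint : ∀ J : ZMod n,
        (∫ t in (0:ℝ)..1, φ I ((1 - t) • x J + t • x (J + 1)))
          = ((if J = I then (1:ℝ) else 0) + (if J + 1 = I then (1:ℝ) else 0)) / 2 := by
      intro J
      obtain ⟨A, hAf⟩ := haff I J
      have h1 : (∫ t in (0:ℝ)..1, φ I ((1 - t) • x J + t • x (J + 1)))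
          = ∫ t in (0:ℝ)..1, A ((1 - t) • x J + t • x (J + 1)) := by
        apply intervalIntegral.integral_congr
        intro t ht
        rw [Set.uIcc_of_le (by norm_num : (0:ℝ) ≤ 1)] at ht
        exact hAf t ht
      have h0 : A (x J) = φ I (x J) := by
        have := hAf 0 ⟨le_refl _, by norm_num⟩
        simpa using this.symm
      have h1' : A (x (J + 1)) = φ I (x (J + 1)) := by
        have := hAf 1 ⟨by norm_num, le_refl _⟩
        simpa using this.symm
      rw [h1, affine_seg_integral, h0, h1', hval, hval]
    simp only [hint]
    have split : ∀ J : ZMod n,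
        (((if J = I then (1:ℝ) else 0) + (if J + 1 = I then (1:ℝ) else 0)) / 2) • rot (edge n x J)
          = (if J = I then (1/2 : ℝ) • rot (edge n x J) else 0)
            + (if J + 1 = I then (1/2 : ℝ) • rot (edge n x J) else 0) := by
      intro J; split_ifs <;> simp <;> module
    simp only [split]
    rw [Finset.sum_add_distrib]
    have e1 : (∑ J : ZMod n, if J = I then (1/2 : ℝ) • rot (edge n x J) else 0)
        = (1/2 : ℝ) • rot (edge n x I) := by
      simp [Finset.sum_ite_eq']
    have e2 : (∑ J : ZMod n, if J + 1 = I then (1/2 : ℝ) • rot (edge n x J) else 0)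
        = (1/2 : ℝ) • rot (edge n x (I - 1)) := by
      have : ∀ J : ZMod n, (J + 1 = I) ↔ (J = I - 1) := by
        intro J
        constructor
        · intro h; exact eq_sub_of_add_eq h
        · intro h; rw [h]; ring
      simp only [this]
      simp [Finset.sum_ite_eq']
    rw [e1, e2, Rvec]
    module
  intro I J
  rw [key I, key J]
  simp only [dot2, Prod.smul_fst, Prod.smul_snd, smul_eq_mul]
  field_simp
end

section
/- Let n ≥ 3 and let x_1, …, x_n ∈ ℝ² with indices modulo n, edge vectors e_J = x_{J+1} − x_J, rot(a,b) = (b,−a), signed area |E| = (1/2)∑_{J=1}^n (x_{J,1} x_{J+1,2} − x_{J+1,1} x_{J,2}), and R_I = (1/2)(rot(e_{I−1}) + rot(e_I)). Then ∑_{I=1}^n R_I ⊗ x_I = |E| · Id_{2×2}, where (u ⊗ w)_{ab} = u_a w_b is the outer product; equivalently, ∑_{J=1}^n rot(e_J) ⊗ ((x_J + x_{J+1})/2) = |E| · Id_{2×2}. (In VEM notation this is the identity Rᵀ N = |E| I₂ between the matrix R of consistency vectors and the nodal coordinate matrix N.) -/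
open scoped BigOperators

/-- A vector of `ℝ²` as a `Fin 2`-indexed column. -/
def vecOf (u : ℝ × ℝ) : Fin 2 → ℝ := ![u.1, u.2]

/-- Outer product `(u ⊗ w)_{ab} = u_a w_b` of two vectors of `ℝ²`. -/
def outer (u w : ℝ × ℝ) : Matrix (Fin 2) (Fin 2) ℝ :=
  Matrix.vecMulVec (vecOf u) (vecOf w)

/-- Reindexing a sum over `ZMod n` by a shift. -/
lemma vem_shift_sum {n : ℕ} [NeZero n] (f : ZMod n → ℝ) :
    ∑ J : ZMod n, f (J + 1) = ∑ J : ZMod n, f J :=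
  Fintype.sum_equiv (Equiv.addRight (1 : ZMod n)) _ _ (fun _ => rfl)

/-- Telescoping sums over `ZMod n` vanish. -/
lemma vem_tele {n : ℕ} [NeZero n] (g : ZMod n → ℝ) :
    ∑ J : ZMod n, (g (J + 1) - g J) = 0 := by
  rw [Finset.sum_sub_distrib, vem_shift_sum, sub_self]

/-- Two sums over `ZMod n` agree if their terms differ by a telescoping term. -/
lemma vem_sum_eq_of_tele {n : ℕ} [NeZero n] (f h g : ZMod n → ℝ)
    (H : ∀ J, f J = h J + (g (J + 1) - g J)) :
    ∑ J : ZMod n, f J = ∑ J : ZMod n, h J := by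
  calc ∑ J : ZMod n, f J = ∑ J : ZMod n, (h J + (g (J + 1) - g J)) :=
        Finset.sum_congr rfl (fun J _ => H J)
    _ = ∑ J : ZMod n, h J + ∑ J : ZMod n, (g (J + 1) - g J) := Finset.sum_add_distrib
    _ = ∑ J : ZMod n, h J := by rw [vem_tele, add_zero]

/-- **The VEM identity `Rᵀ N = |E| I₂`.**
For a polygon with vertices `x_I` (indices mod `n`), signed area `|E|` and
consistency vectors `R_I`, one has `∑_I R_I ⊗ x_I = |E| Id`; equivalently
`∑_J rot(e_J) ⊗ ((x_J + x_{J+1})/2) = |E| Id`. -/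
theorem vem_R_transpose_N_eq_area_id
    (n : ℕ) [NeZero n] (hn : 3 ≤ n)
    (x : ZMod n → ℝ × ℝ) :
    (∑ I : ZMod n, outer (Rvec n x I) (x I)
        = signedArea n x • (1 : Matrix (Fin 2) (Fin 2) ℝ)) ∧
    (∑ J : ZMod n, outer (rot (edge n x J)) ((1 / 2 : ℝ) • (x J + x (J + 1)))
        = signedArea n x • (1 : Matrix (Fin 2) (Fin 2) ℝ)) := by
  have harea : (2⁻¹ : ℝ) * ∑ J : ZMod n,
      ((x J).1 * (x (J + 1)).2 - (x (J + 1)).1 * (x J).2)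
      = ∑ J : ZMod n, (2⁻¹ : ℝ) * ((x J).1 * (x (J + 1)).2 - (x (J + 1)).1 * (x J).2) :=
    Finset.mul_sum _ _ _
  constructor
  · ext a b
    fin_cases a <;> fin_cases b <;>
      simp only [outer, vecOf, Rvec, rot, edge, Matrix.vecMulVec_apply, Matrix.sum_apply,
        Matrix.smul_apply, Matrix.one_apply, signedArea, Prod.smul_fst, Prod.smul_snd,
        Prod.fst_add, Prod.snd_add, Prod.fst_sub, Prod.snd_sub, sub_add_cancel,
        Matrix.cons_val', Matrix.cons_val_zero, Matrix.cons_val_one, Matrix.head_cons,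
        Matrix.empty_val', Matrix.cons_val_fin_one, Matrix.head_fin_const,
        Fin.mk_zero, Fin.mk_one, if_true, if_false, smul_eq_mul, one_div,
        Fin.isValue, ne_eq, zero_ne_one, one_ne_zero, not_false_eq_true, ite_true,
        reduceIte, mul_one, mul_zero, smul_zero]
    · rw [harea]
      exact vem_sum_eq_of_tele _ _
        (fun I => 2⁻¹ * (x I).1 * (x (I - 1)).2)
        (fun I => by simp only [add_sub_cancel_right]; ring)
    · rw [show (0:ℝ) = ∑ J : ZMod n, (0:ℝ) by simp]
      exact vem_sum_eq_of_tele _ _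
        (fun I => 2⁻¹ * (x I).2 * (x (I - 1)).2)
        (fun I => by simp only [add_sub_cancel_right]; ring)
    · rw [show (0:ℝ) = ∑ J : ZMod n, (0:ℝ) by simp]
      exact vem_sum_eq_of_tele _ _
        (fun I => -(2⁻¹ * (x I).1 * (x (I - 1)).1))
        (fun I => by simp only [add_sub_cancel_right]; ring)
    · rw [harea]
      exact vem_sum_eq_of_tele _ _
        (fun I => -(2⁻¹ * (x (I - 1)).1 * (x I).2))
        (fun I => by simp only [add_sub_cancel_right]; ring)
  · ext a b
    fin_cases a <;> fin_cases b <;>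
      simp only [outer, vecOf, rot, edge, Matrix.vecMulVec_apply, Matrix.sum_apply,
        Matrix.smul_apply, Matrix.one_apply, signedArea, Prod.smul_fst, Prod.smul_snd,
        Prod.fst_add, Prod.snd_add, Prod.fst_sub, Prod.snd_sub,
        Matrix.cons_val', Matrix.cons_val_zero, Matrix.cons_val_one, Matrix.head_cons,
        Matrix.empty_val', Matrix.cons_val_fin_one, Matrix.head_fin_const,
        Fin.mk_zero, Fin.mk_one, if_true, if_false, smul_eq_mul, one_div,
        Fin.isValue, ne_eq, zero_ne_one, one_ne_zero, not_false_eq_true, ite_true,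
        reduceIte, mul_one, mul_zero, smul_zero]
    · rw [harea]
      exact vem_sum_eq_of_tele _ _
        (fun I => 2⁻¹ * (x I).1 * (x I).2)
        (fun I => by ring)
    · rw [show (0:ℝ) = ∑ J : ZMod n, (0:ℝ) by simp]
      exact vem_sum_eq_of_tele _ _
        (fun I => 2⁻¹ * (x I).2 * (x I).2)
        (fun I => by ring)
    · rw [show (0:ℝ) = ∑ J : ZMod n, (0:ℝ) by simp]
      exact vem_sum_eq_of_tele _ _
        (fun I => -(2⁻¹ * (x I).1 * (x I).1))
        (fun I => by ring)
    · rw [harea]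
      exact vem_sum_eq_of_tele _ _
        (fun I => -(2⁻¹ * (x I).1 * (x I).2))
        (fun I => by ring)
end

section
/- Let N₁(x,y) = (1−x)(1−y), N₂(x,y) = x(1−y), N₃(x,y) = xy, N₄(x,y) = (1−x)y be the bilinear shape functions on the unit square [0,1]², with vertices x₁ = (0,0), x₂ = (1,0), x₃ = (1,1), x₄ = (0,1) taken counterclockwise (indices modulo 4), edge vectors e_J = x_{J+1} − x_J, rot(a,b) = (b,−a), area |E| = 1, and R_I = (1/2)(rot(e_{I−1}) + rot(e_I)). Then the reduced-integration (one Gauss point at the centroid) FEM stiffness matrix K^red_{IJ} = ∇N_I(1/2, 1/2) · ∇N_J(1/2, 1/2) and the VEM consistency matrix K^c_{IJ} = (1/|E|) R_I · R_J are equal, and both equal (1/2) · [[1, 0, −1, 0], [0, 1, 0, −1], [−1, 0, 1, 0], [0, −1, 0, 1]]. -/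
open scoped BigOperators

/-- Bilinear shape functions of the unit square `[0,1]²`: `N_I(x_J) = δ_{IJ}`. -/
noncomputable def N : Fin 4 → ℝ × ℝ → ℝ :=
  ![fun p => (1 - p.1) * (1 - p.2),
    fun p => p.1 * (1 - p.2),
    fun p => p.1 * p.2,
    fun p => (1 - p.1) * p.2]

/-- Vertices `x₁ = (0,0), x₂ = (1,0), x₃ = (1,1), x₄ = (0,1)` of the unit
square, counterclockwise, indexed mod 4. -/
noncomputable def sqVerts : ZMod 4 → ℝ × ℝ := fun J =>
  if J = 0 then (0, 0) else if J = 1 then (1, 0) else if J = 2 then (1, 1) else (0, 1)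


/-!
On the unit square the gradient of each bilinear shape function at the centroid is exactly the
VEM vector `R_I = (1/2) rot(x_{I+1} - x_{I-1}) = (1/2)(±1, ±1)`, and `|E| = 1`. Hence the two
matrices are the same Gram matrix `(R_I · R_J)`, whose entries are `1/2`, `0` or `-1/2`.
-/

theorem ZMod.sum_univ_four {M : Type*} [AddCommMonoid M] (f : ZMod 4 → M) :
    ∑ J, f J = f 0 + f 1 + f 2 + f 3 :=
  Fin.sum_univ_four f

lemma rot_add (u w : ℝ × ℝ) : rot (u + w) = rot u + rot w := by
  simp only [rot, Prod.fst_add, Prod.snd_add, neg_add, Prod.mk_add_mk]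

lemma Rvec_eq_half_rot_sub (n : ℕ) (x : ZMod n → ℝ × ℝ) (I : ZMod n) :
    Rvec n x I = (1 / 2 : ℝ) • rot (x (I + 1) - x (I - 1)) := by
  rw [Rvec, edge, edge, ← rot_add, sub_add_cancel, add_comm, sub_add_sub_cancel]

lemma fderiv_mul_fst_snd_apply {f g : ℝ → ℝ} {a b : ℝ} (hf : DifferentiableAt ℝ f a)
    (hg : DifferentiableAt ℝ g b) (v : ℝ × ℝ) :
    fderiv ℝ (fun p : ℝ × ℝ => f p.1 * g p.2) (a, b) v
      = deriv f a * g b * v.1 + f a * deriv g b * v.2 := by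
  have h : HasFDerivAt (fun p : ℝ × ℝ => f p.1 * g p.2) _ (a, b) :=
    (hf.hasDerivAt.comp_hasFDerivAt (a, b) (hasFDerivAt_fst (𝕜 := ℝ) (p := (a, b)))).mul
      (hg.hasDerivAt.comp_hasFDerivAt (a, b) (hasFDerivAt_snd (𝕜 := ℝ) (p := (a, b))))
  rw [h.fderiv]
  simp only [add_apply, smul_apply,
    ContinuousLinearMap.coe_fst', ContinuousLinearMap.coe_snd', Function.comp_apply, smul_eq_mul]
  ring

lemma signedArea_sqVerts : signedArea 4 sqVerts = 1 := by
  rw [signedArea, ZMod.sum_univ_four]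
  simp +decide [sqVerts]
  norm_num

lemma Rvec_sqVerts (I : Fin 4) :
    Rvec 4 sqVerts ((I : ℕ) : ZMod 4) = (1 / 2 : ℝ) • ![(-1, -1), (1, -1), (1, 1), (-1, 1)] I := by
  rw [Rvec_eq_half_rot_sub]
  fin_cases I <;> simp +decide [sqVerts, rot]

lemma N_eq_mul_fst_snd (I : Fin 4) :
    N I = fun p => ![fun t => 1 - t, fun t => t, fun t => t, fun t => 1 - t] I p.1 *
      ![fun t => 1 - t, fun t => 1 - t, fun t => t, fun t => t] I p.2 := by
  fin_cases I <;> rfl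

lemma grad_N_centroid_eq_Rvec (I : Fin 4) :
    (fderiv ℝ (N I) ((1:ℝ)/2, (1:ℝ)/2) (1, 0), fderiv ℝ (N I) ((1:ℝ)/2, (1:ℝ)/2) (0, 1))
      = Rvec 4 sqVerts ((I : ℕ) : ZMod 4) := by
  have hx : Differentiable ℝ (![fun t : ℝ => 1 - t, fun t => t, fun t => t, fun t => 1 - t] I) := by
    fin_cases I <;> simp <;> fun_prop
  have hy : Differentiable ℝ (![fun t : ℝ => 1 - t, fun t => 1 - t, fun t => t, fun t => t] I) := by
    fin_cases I <;> simp <;> fun_prop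
  rw [Rvec_sqVerts, N_eq_mul_fst_snd, fderiv_mul_fst_snd_apply (hx _) (hy _),
    fderiv_mul_fst_snd_apply (hx _) (hy _)]
  fin_cases I <;> simp <;> norm_num

/-- **Reduced-integration FEM = VEM consistency matrix on the unit square.**
The one-Gauss-point FEM stiffness matrix `K^red_{IJ} = ∇N_I(1/2,1/2)·∇N_J(1/2,1/2)`
and the VEM consistency matrix `K^c_{IJ} = (1/|E|) R_I · R_J` coincide, both
being `(1/2)[[1,0,−1,0],[0,1,0,−1],[−1,0,1,0],[0,−1,0,1]]`. -/
theorem reduced_fem_eq_vem_consistency_unit_square :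
    (Matrix.of fun I J : Fin 4 =>
        (fderiv ℝ (N I) ((1:ℝ)/2, (1:ℝ)/2)) (1, 0) *
          (fderiv ℝ (N J) ((1:ℝ)/2, (1:ℝ)/2)) (1, 0) +
        (fderiv ℝ (N I) ((1:ℝ)/2, (1:ℝ)/2)) (0, 1) *
          (fderiv ℝ (N J) ((1:ℝ)/2, (1:ℝ)/2)) (0, 1))
      = (1 / 2 : ℝ) •
          !![1, 0, -1, 0;
             0, 1, 0, -1;
             -1, 0, 1, 0;
             0, -1, 0, 1] ∧
    (Matrix.of fun I J : Fin 4 =>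
        (signedArea 4 sqVerts)⁻¹ *
          dot2 (Rvec 4 sqVerts ((I : ℕ) : ZMod 4)) (Rvec 4 sqVerts ((J : ℕ) : ZMod 4)))
      = (1 / 2 : ℝ) •
          !![1, 0, -1, 0;
             0, 1, 0, -1;
             -1, 0, 1, 0;
             0, -1, 0, 1] := by
  have hvem : (Matrix.of fun I J : Fin 4 =>
        (signedArea 4 sqVerts)⁻¹ *
          dot2 (Rvec 4 sqVerts ((I : ℕ) : ZMod 4)) (Rvec 4 sqVerts ((J : ℕ) : ZMod 4)))
      = (1 / 2 : ℝ) • !![1, 0, -1, 0; 0, 1, 0, -1; -1, 0, 1, 0; 0, -1, 0, 1] := by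
    ext I J
    rw [Matrix.of_apply, signedArea_sqVerts, inv_one, one_mul, Rvec_sqVerts, Rvec_sqVerts]
    fin_cases I <;> fin_cases J <;> simp [dot2] <;> norm_num
  refine ⟨Eq.trans ?_ hvem, hvem⟩
  ext I J
  rw [Matrix.of_apply, Matrix.of_apply, signedArea_sqVerts, inv_one, one_mul,
    ← grad_N_centroid_eq_Rvec, ← grad_N_centroid_eq_Rvec, dot2]
end
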